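/- arXiv:0905.3346 — 2 statements merged into one kernel-verified Lean document; each statement's English description precedes it below -/
import Mathlib

section
/- The diophantine equation x⁴ + 12x²y² + 29y⁴ = z² has no solution in positive integers x, y, z. -/
/-!
Descent on `y`. For a solution with `x, y` coprime, a computation mod 8 shows that `y = 2Y` is
even, and `w = x² + 6y²` satisfies `w² - z² = 7y⁴`. The halves `(w ∓ z)/2` are coprime with
product `28Y⁴`, so mod 8 forces `w = 28a⁴ + b⁴` with `Y = ab`, `a` even, `b` odd.
Then `c = b² - 12a²` satisfies `c² - x² = 116a⁴`, and the same factorisation of `(c ∓ x)/2`,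
again sieved mod 8 (`c ≡ 1`), forces `c = 29C⁴ + D⁴` with `a = CD`: that is,
`D⁴ + 12D²C² + 29C⁴ = b²`, a solution with `C < y`. Non-coprime solutions descend by dividing
out `gcd x y`.
-/

theorem Int.sq_emod_eight_of_odd {x : ℤ} (hx : Odd x) : x ^ 2 % 8 = 1 := by
  obtain ⟨k, rfl⟩ := hx
  obtain ⟨m, hm⟩ := Int.even_mul_succ_self k
  have : (2 * k + 1) ^ 2 = 4 * (k * (k + 1)) + 1 := by ring
  omega

theorem Int.pow_four_emod_eight_of_odd {x : ℤ} (hx : Odd x) : x ^ 4 % 8 = 1 := by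
  simpa [← pow_mul] using Int.sq_emod_eight_of_odd (hx.pow (n := 2))

theorem Int.pow_four_emod_eight (x : ℤ) : x ^ 4 % 8 = 0 ∨ x ^ 4 % 8 = 1 := by
  rcases Int.even_or_odd x with ⟨k, rfl⟩ | hx
  · left
    have : (k + k) ^ 4 = 8 * (2 * k ^ 4) := by ring
    omega
  · exact Or.inr (Int.pow_four_emod_eight_of_odd hx)

theorem Int.exists_pow_eq_of_mul_eq_pow_of_even {a b c : ℤ} {n : ℕ} (hn : Even n)
    (hab : IsCoprime a b) (ha : 0 < a) (h : a * b = c ^ n) : ∃ d, 0 ≤ d ∧ a = d ^ n := by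
  obtain ⟨d, hd⟩ := exists_associated_pow_of_mul_eq_pow' hab h
  refine ⟨|d|, abs_nonneg d, ?_⟩
  rw [hn.pow_abs]
  rcases Int.associated_iff.mp hd with hd | hd
  · exact hd.symm
  · linarith [hn.pow_nonneg d]

theorem Int.exists_pow_four_of_mul_eq_pow_four {e f t : ℤ} (he : 0 < e) (hf : 0 < f)
    (ht : 0 ≤ t) (hef : IsCoprime e f) (h : e * f = t ^ 4) :
    ∃ a b, 0 < a ∧ 0 < b ∧ e = a ^ 4 ∧ f = b ^ 4 ∧ t = a * b := by
  have h4 : Even 4 := by decide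
  obtain ⟨a, ha, rfl⟩ := Int.exists_pow_eq_of_mul_eq_pow_of_even h4 hef he h
  obtain ⟨b, hb, rfl⟩ :=
    Int.exists_pow_eq_of_mul_eq_pow_of_even h4 hef.symm hf ((mul_comm _ _).trans h)
  have ha : 0 < a := lt_of_le_of_ne ha (by rintro rfl; simp at he)
  have hb : 0 < b := lt_of_le_of_ne hb (by rintro rfl; simp at hf)
  refine ⟨a, b, ha, hb, rfl, rfl, ?_⟩
  rw [← mul_pow] at h
  exact ((pow_left_inj₀ (by positivity) ht (by norm_num)).mp h).symm

theorem Int.exists_pow_four_of_mul_eq_prime_mul_pow_four {E O p t : ℤ} (hp : Prime p)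
    (hp0 : 0 < p) (hE : 0 < E) (hO : 0 < O) (ht : 0 ≤ t) (hEO : IsCoprime E O)
    (h : E * O = p * t ^ 4) : ∃ a b, 0 < a ∧ 0 < b ∧ t = a * b ∧
      (E = p * a ^ 4 ∧ O = b ^ 4 ∨ E = a ^ 4 ∧ O = p * b ^ 4) := by
  rcases hp.dvd_mul.mp ⟨t ^ 4, h⟩ with ⟨e, rfl⟩ | ⟨f, rfl⟩
  · have he : e * O = t ^ 4 := mul_left_cancel₀ hp.ne_zero (by linear_combination h)
    obtain ⟨a, b, ha, hb, rfl, rfl, rfl⟩ := Int.exists_pow_four_of_mul_eq_pow_four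
      (pos_of_mul_pos_right hE hp0.le) hO ht hEO.of_mul_left_right he
    exact ⟨a, b, ha, hb, rfl, Or.inl ⟨rfl, rfl⟩⟩
  · have hf : E * f = t ^ 4 := mul_left_cancel₀ hp.ne_zero (by linear_combination h)
    obtain ⟨a, b, ha, hb, rfl, rfl, rfl⟩ := Int.exists_pow_four_of_mul_eq_pow_four
      hE (pos_of_mul_pos_right hO hp0.le) ht hEO.of_mul_right_right hf
    exact ⟨a, b, ha, hb, rfl, Or.inr ⟨rfl, rfl⟩⟩

theorem isCoprime_of_sq_sub_sq_eq_mul {w z k m : ℤ} (hk : Squarefree k) (hwm : IsCoprime w m)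
    (h : w ^ 2 - z ^ 2 = k * m) : IsCoprime w z := by
  refine isCoprime_of_prime_dvd ?_ fun q hq hqw hqz ↦ ?_
  · rintro ⟨rfl, rfl⟩
    rcases mul_eq_zero.mp (by simpa using h.symm : k * m = 0) with rfl | rfl
    · exact not_squarefree_zero hk
    · exact not_isCoprime_zero_zero hwm
  have hqm : IsCoprime q m := hwm.of_isCoprime_of_dvd_left hqw
  have hqq : q * q ∣ k * m := h ▸ by
    rw [sq, sq]; exact dvd_sub (mul_dvd_mul hqw hqw) (mul_dvd_mul hqz hqz)
  exact hq.not_isUnit (hk q ((hqm.mul_left hqm).dvd_of_dvd_mul_right hqq))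

theorem exists_coprime_factors_of_sq_sub_sq {w z P : ℤ} (hw : Odd w) (hwz : IsCoprime w z)
    (h : w ^ 2 - z ^ 2 = 4 * P) (hP : 0 < P) : ∃ E O, 0 < E ∧ 0 < O ∧ Odd O ∧
      IsCoprime E O ∧ E * O = P ∧ E + O = |w| := by
  have hz : Odd z := by
    have : Odd (z ^ 2) := by
      rw [show z ^ 2 = w ^ 2 - 2 * (2 * P) by linear_combination -h]
      exact hw.pow.sub_even (even_two_mul _)
    exact (Int.odd_pow.mp this).resolve_right two_ne_zero
  obtain ⟨u, hu⟩ : Even (w - z) := hw.sub_odd hz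
  have hw' : w = u + (u + z) := by linarith
  rw [hw'] at h hwz
  have huv : u * (u + z) = P := by linarith
  have hcop : IsCoprime u (u + z) := by
    obtain ⟨A, B, hAB⟩ := hwz
    exact ⟨A - B, A + B, by linear_combination hAB⟩
  obtain ⟨m, n, hm, hn, hsum, hprod, hcop⟩ : ∃ m n, 0 < m ∧ 0 < n ∧ m + n = |w| ∧
      m * n = P ∧ IsCoprime m n := by
    rcases mul_pos_iff.mp (huv ▸ hP) with ⟨hu, hv⟩ | ⟨hu, hv⟩
    · exact ⟨u, u + z, hu, hv, by rw [hw', abs_of_pos (by linarith)], huv, hcop⟩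
    · refine ⟨-u, -(u + z), by linarith, by linarith, ?_, by linear_combination huv,
        hcop.neg_neg⟩
      rw [hw', abs_of_neg (by linarith)]; ring
  have hodd : Odd (m + n) := hsum ▸ odd_abs.mpr hw
  rcases Int.even_or_odd m with hme | hmo
  · exact ⟨m, n, hm, hn, (Int.odd_add'.mp hodd).mpr hme, hcop, hprod, hsum⟩
  · exact ⟨n, m, hn, hm, hmo, hcop.symm, by rw [mul_comm, hprod], by rw [add_comm, hsum]⟩

structure IsSolution (x y z : ℤ) : Prop where
  x_pos : 0 < x
  y_pos : 0 < y
  z_pos : 0 < z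
  eq : x ^ 4 + 12 * x ^ 2 * y ^ 2 + 29 * y ^ 4 = z ^ 2

theorem even_of_pow_four_add_eq_sq {x y z : ℤ}
    (h : x ^ 4 + 12 * x ^ 2 * y ^ 2 + 29 * y ^ 4 = z ^ 2) : Even y := by
  by_contra hy
  obtain ⟨k, rfl⟩ := Int.not_even_iff_odd.mp hy
  have h8 := congrArg (Int.cast : ℤ → ZMod 8) h
  push_cast at h8
  generalize (x : ZMod 8) = X, (k : ZMod 8) = K, (z : ZMod 8) = Z at h8
  revert X K Z
  decide

theorem IsSolution.exists_sq_add_eq_of_isCoprime {x y z : ℤ} (h : IsSolution x y z)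
    (hxy : IsCoprime x y) : ∃ a b, 0 < a ∧ 0 < b ∧ Even a ∧ Odd b ∧ IsCoprime a b ∧
      x ^ 2 + 24 * a ^ 2 * b ^ 2 = 28 * a ^ 4 + b ^ 4 ∧ y = 2 * a * b := by
  obtain ⟨Y, rfl⟩ := (even_of_pow_four_add_eq_sq h.eq).two_dvd
  have hY : 0 < Y := by linarith [h.y_pos]
  have hx : Odd x := Int.isCoprime_two_right.mp hxy.of_mul_right_left
  have hx8 := Int.sq_emod_eight_of_odd hx
  have hw : Odd (x ^ 2 + 24 * Y ^ 2) := Int.odd_iff.mpr (by omega)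
  have hwy : IsCoprime (x ^ 2 + 24 * Y ^ 2) ((2 * Y) ^ 4) := by
    rw [show x ^ 2 + 24 * Y ^ 2 = x ^ 2 + 2 * Y * (12 * Y) by ring]
    exact (hxy.pow_left.add_mul_left_left _).pow_right
  have h7 : Prime (7 : ℤ) := by norm_num
  have hwz := isCoprime_of_sq_sub_sq_eq_mul h7.squarefree hwy (z := z)
    (by linear_combination h.eq)
  obtain ⟨E, O, hE, hO, hOodd, hEO, hprod, hsum⟩ :=
    exists_coprime_factors_of_sq_sub_sq hw hwz (P := 28 * Y ^ 4) (by linear_combination h.eq)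
      (by positivity)
  rw [abs_of_pos (by positivity)] at hsum
  obtain ⟨e, rfl⟩ : 4 ∣ E :=
    ((Int.isCoprime_two_left.mpr hOodd).pow_left (m := 2)).dvd_of_dvd_mul_right
      ⟨7 * Y ^ 4, by linear_combination hprod⟩
  obtain ⟨a, b, ha, hb, rfl, hsplit⟩ := Int.exists_pow_four_of_mul_eq_prime_mul_pow_four
    h7 (by norm_num) (by linarith) hO hY.le hEO.of_mul_left_right
    (mul_left_cancel₀ four_ne_zero (by linear_combination hprod))
  rcases hsplit with ⟨rfl, rfl⟩ | ⟨rfl, rfl⟩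
  · have hb2 : Odd b := (Int.odd_pow.mp hOodd).resolve_right four_ne_zero
    have ha2 : Even a := by
      by_contra ha2
      have := Int.pow_four_emod_eight_of_odd (Int.not_even_iff_odd.mp ha2)
      have := Int.pow_four_emod_eight_of_odd hb2
      omega
    exact ⟨a, b, ha, hb, ha2, hb2,
      (IsCoprime.pow_iff four_pos four_pos).mp hEO.of_mul_left_right.of_mul_left_right,
      by linear_combination -hsum, by ring⟩
  · have hb2 : Odd b := (Int.odd_pow.mp (Int.odd_mul.mp hOodd).2).resolve_right four_ne_zero
    have := Int.pow_four_emod_eight_of_odd hb2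
    omega

theorem exists_isSolution_of_sq_add_eq {a b x : ℤ} (ha : 0 < a) (hb : 0 < b) (ha2 : Even a)
    (hb2 : Odd b) (hab : IsCoprime a b) (h : x ^ 2 + 24 * a ^ 2 * b ^ 2 = 28 * a ^ 4 + b ^ 4) :
    ∃ C D, 0 < C ∧ C ≤ a ∧ IsSolution D C b := by
  have hc8 : (b ^ 2 - 12 * a ^ 2) % 8 = 1 := by
    have := Int.sq_emod_eight_of_odd hb2
    have := Int.even_iff.mp (ha2.pow_of_ne_zero two_ne_zero)
    omega
  have hc : Odd (b ^ 2 - 12 * a ^ 2) := Int.odd_iff.mpr (by omega)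
  have hca : IsCoprime (b ^ 2 - 12 * a ^ 2) (4 * a ^ 4) := by
    refine IsCoprime.mul_right ?_ ?_
    · exact (Int.isCoprime_two_right.mpr hc).pow_right (n := 2)
    · refine IsCoprime.pow_right ?_
      rw [show b ^ 2 - 12 * a ^ 2 = b ^ 2 - a * (12 * a) by ring]
      exact IsCoprime.sub_mul_left_left_iff.mpr hab.symm.pow_left
  have h29 : Prime (29 : ℤ) := by norm_num
  have hcx := isCoprime_of_sq_sub_sq_eq_mul h29.squarefree hca (z := x)
    (by linear_combination -h)
  obtain ⟨E, O, hE, hO, hOodd, hEO, hprod, hsum⟩ :=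
    exists_coprime_factors_of_sq_sub_sq hc hcx (P := 29 * a ^ 4) (by linear_combination -h)
      (by positivity)
  obtain ⟨C, D, hC, hD, rfl, hsplit⟩ :=
    Int.exists_pow_four_of_mul_eq_prime_mul_pow_four h29 (by norm_num) hE hO ha.le hEO hprod
  have hC4 := Int.pow_four_emod_eight C
  rcases hsplit with ⟨rfl, rfl⟩ | ⟨rfl, rfl⟩
  · have hD4 :=
      Int.pow_four_emod_eight_of_odd ((Int.odd_pow.mp hOodd).resolve_right four_ne_zero)
    rcases abs_choice (b ^ 2 - 12 * (C * D) ^ 2) with habs | habs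
    · exact ⟨C, D, hC, le_mul_of_one_le_right hC.le hD, hD, hC, hb,
        by linear_combination hsum + habs⟩
    · omega
  · have hD4 := Int.pow_four_emod_eight_of_odd
      ((Int.odd_pow.mp (Int.odd_mul.mp hOodd).2).resolve_right four_ne_zero)
    rcases abs_choice (b ^ 2 - 12 * (C * D) ^ 2) with habs | habs <;> omega

theorem IsSolution.exists_lt_of_isCoprime {x y z : ℤ} (h : IsSolution x y z)
    (hxy : IsCoprime x y) : ∃ x' y' z', IsSolution x' y' z' ∧ y' < y := by
  obtain ⟨a, b, ha, hb, ha2, hb2, hab, hx, rfl⟩ := h.exists_sq_add_eq_of_isCoprime hxy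
  obtain ⟨C, D, -, hCa, hsol⟩ := exists_isSolution_of_sq_add_eq ha hb ha2 hb2 hab hx
  exact ⟨D, C, b, hsol, by nlinarith⟩

theorem IsSolution.exists_lt_of_not_isCoprime {x y z : ℤ} (h : IsSolution x y z)
    (hxy : ¬IsCoprime x y) : ∃ x' y' z', IsSolution x' y' z' ∧ y' < y := by
  obtain ⟨g, x', y', -, hcop, rfl, rfl⟩ :=
    Int.exists_gcd_one' (Int.gcd_pos_of_ne_zero_left y h.x_pos.ne')
  have hg : 2 ≤ (g : ℤ) := by
    have : g ≠ 0 := by rintro rfl; simpa using h.x_pos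
    have : g ≠ 1 := by rintro rfl; simp_all [Int.isCoprime_iff_gcd_eq_one]
    omega
  have hz : (g : ℤ) ^ 4 * (x' ^ 4 + 12 * x' ^ 2 * y' ^ 2 + 29 * y' ^ 4) = z ^ 2 := by
    linear_combination h.eq
  obtain ⟨z', rfl⟩ : (g : ℤ) ^ 2 ∣ z :=
    (Int.pow_dvd_pow_iff two_ne_zero).mp
      ⟨x' ^ 4 + 12 * x' ^ 2 * y' ^ 2 + 29 * y' ^ 4, by rw [← hz]; ring⟩
  have hy' : 0 < y' := pos_of_mul_pos_left h.y_pos (by positivity)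
  refine ⟨x', y', z', ⟨pos_of_mul_pos_left h.x_pos (by positivity), hy',
    pos_of_mul_pos_right h.z_pos (by positivity),
    mul_left_cancel₀ (pow_pos (by omega : (0 : ℤ) < g) 4).ne' (by linear_combination hz)⟩,
    by nlinarith⟩

theorem IsSolution.exists_lt {x y z : ℤ} (h : IsSolution x y z) :
    ∃ x' y' z', IsSolution x' y' z' ∧ y' < y := by
  by_cases hxy : IsCoprime x y
  exacts [h.exists_lt_of_isCoprime hxy, h.exists_lt_of_not_isCoprime hxy]

theorem not_isSolution (x y z : ℤ) : ¬IsSolution x y z := by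
  suffices ∀ n : ℕ, ∀ x y z : ℤ, y < n → ¬IsSolution x y z from
    this (y.toNat + 1) x y z (by omega)
  intro n
  induction n with
  | zero => exact fun x y z hy h ↦ by push_cast at hy; linarith [h.y_pos]
  | succ n ih =>
    intro x y z hy h
    obtain ⟨x', y', z', h', hlt⟩ := h.exists_lt
    exact ih x' y' z' (by omega) h'

theorem stmt6 :
    ¬ ∃ x y z : ℤ, 0 < x ∧ 0 < y ∧ 0 < z ∧
      x ^ 4 + 12 * x ^ 2 * y ^ 2 + 29 * y ^ 4 = z ^ 2 := by
  rintro ⟨x, y, z, hx, hy, hz, h⟩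
  exact not_isSolution x y z ⟨hx, hy, hz, h⟩
end

section
/- The diophantine equation x⁴ + 4x²y² − 19y⁴ = z² has no solution in positive integers x, y, z. -/
/-!
The quartic `z² = x⁴ + 4x²y² − 19y⁴` is 2-isogenous to `w² = E⁴ − 8E²F² + 92F⁴` (the partner
of `x⁴ + a x²y² + b y⁴` is `x⁴ − 2a x²y² + (a² − 4b) y⁴`, and `4² + 4·19 = 92`), and the proof
is a 2-descent between them.

For a primitive solution `y` cannot be odd (the quartic is then `2` or `13` mod `16`). For
even `y = 2y₀`, put `a = x² + 2y²`: then `a² − z² = 23 y⁴`, and splitting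
`(a − z)/2 · (a + z)/2` into coprime factors `23 s²`, `t²` gives `x² = 23s² + t² − 8y₀²`
with `st = 2y₀²`; this yields a solution `(E, F, x)` of the isogenous quartic with `F ≤ y₀`.
There `c = E² − 4F²` satisfies `w² − c² = 76 F⁴`, and splitting `(w − c)/2 · (w + c)/2 = 19 F⁴`
returns a solution of the original quartic with `y ≤ F < y`. The other placements of the
primes `23` and `19` among the coprime factors are excluded mod `8`, so infinite descent on
`y` finishes the proof.
-/

theorem exists_pos_pow_eq_of_mul_eq_pow {a b c : ℤ} {k : ℕ} (hk : k ≠ 0) (ha : 0 < a)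
    (hab : IsCoprime a b) (h : a * b = c ^ k) : ∃ s, 0 < s ∧ a = s ^ k := by
  obtain ⟨d, hd⟩ := exists_associated_pow_of_mul_eq_pow' hab h
  have habs : |a| = |d ^ k| := by
    rcases Int.associated_iff.mp hd with hd | hd <;> simp [hd]
  have had : a = |d| ^ k := by rw [← abs_pow, ← habs, abs_of_pos ha]
  refine ⟨|d|, abs_pos.mpr fun hd0 => ha.ne' ?_, had⟩
  rw [had, hd0, abs_zero, zero_pow hk]

theorem exists_pow_eq_of_mul_eq_pow {a b c : ℤ} {k : ℕ} (hk : k ≠ 0) (ha : 0 < a) (hb : 0 < b)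
    (hc : 0 ≤ c) (hab : IsCoprime a b) (h : a * b = c ^ k) :
    ∃ s t, 0 < s ∧ 0 < t ∧ IsCoprime s t ∧ s * t = c ∧ a = s ^ k ∧ b = t ^ k := by
  obtain ⟨s, hs, rfl⟩ := exists_pos_pow_eq_of_mul_eq_pow hk ha hab h
  obtain ⟨t, ht, rfl⟩ := exists_pos_pow_eq_of_mul_eq_pow hk hb hab.symm ((mul_comm _ _).trans h)
  have hk0 : 0 < k := Nat.pos_of_ne_zero hk
  refine ⟨s, t, hs, ht, (IsCoprime.pow_iff hk0 hk0).mp hab, ?_, rfl, rfl⟩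
  exact (pow_left_inj₀ (mul_pos hs ht).le hc hk).mp (by rw [mul_pow, h])

theorem exists_pow_eq_of_mul_eq_prime_mul_pow_of_dvd {p a b c : ℤ} {k : ℕ} (hp : Prime p)
    (hk : k ≠ 0) (ha : 0 < a) (hb : 0 < b) (hc : 0 ≤ c) (hab : IsCoprime a b)
    (h : a * b = p * c ^ k) (hpa : p ∣ a) :
    ∃ s t, 0 < s ∧ 0 < t ∧ IsCoprime s t ∧ s * t = c ∧ a = p * s ^ k ∧ b = t ^ k := by
  obtain ⟨a', rfl⟩ := hpa
  have hp0 : 0 < p := pos_of_mul_pos_left (h ▸ mul_pos ha hb) (pow_nonneg hc k)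
  have h' : a' * b = c ^ k := mul_left_cancel₀ hp.ne_zero (by rw [← h]; ring)
  obtain ⟨s, t, hs, ht, hst, hmul, rfl, rfl⟩ :=
    exists_pow_eq_of_mul_eq_pow hk (pos_of_mul_pos_right ha hp0.le) hb hc hab.of_mul_left_right h'
  exact ⟨s, t, hs, ht, hst, hmul, rfl, rfl⟩

theorem exists_pow_eq_of_mul_eq_prime_mul_pow {p a b c : ℤ} {k : ℕ} (hp : Prime p) (hk : k ≠ 0)
    (ha : 0 < a) (hb : 0 < b) (hc : 0 ≤ c) (hab : IsCoprime a b) (h : a * b = p * c ^ k) :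
    ∃ s t, 0 < s ∧ 0 < t ∧ IsCoprime s t ∧ s * t = c ∧
      (a = p * s ^ k ∧ b = t ^ k ∨ a = s ^ k ∧ b = p * t ^ k) := by
  rcases hp.dvd_mul.mp (Dvd.intro _ h.symm) with hpa | hpb
  · obtain ⟨s, t, hs, ht, hst, hmul, has, hbt⟩ :=
      exists_pow_eq_of_mul_eq_prime_mul_pow_of_dvd hp hk ha hb hc hab h hpa
    exact ⟨s, t, hs, ht, hst, hmul, Or.inl ⟨has, hbt⟩⟩
  · obtain ⟨t, s, ht, hs, hts, hmul, hbt, has⟩ :=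
      exists_pow_eq_of_mul_eq_prime_mul_pow_of_dvd hp hk hb ha hc hab.symm
        ((mul_comm _ _).trans h) hpb
    exact ⟨s, t, hs, ht, hts.symm, (mul_comm _ _).trans hmul, Or.inr ⟨has, hbt⟩⟩

theorem isCoprime_of_sq_sub_sq_eq_prime_mul {R : Type*} [CommRing R] [IsDomain R] [IsBezout R]
    {p a b m : R} (hp : Prime p) (ham : IsCoprime a m) (h : a ^ 2 - b ^ 2 = p * m) :
    IsCoprime a b := by
  by_cases hpa : p ∣ a
  · exfalso
    have hpb : p ∣ b := hp.dvd_of_dvd_pow (n := 2) <| by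
      rw [show b ^ 2 = a ^ 2 - p * m by rw [← h]; ring]
      exact dvd_sub (dvd_pow hpa two_ne_zero) (dvd_mul_right p m)
    obtain ⟨a', rfl⟩ := hpa
    obtain ⟨b', rfl⟩ := hpb
    have hm : m = p * (a' ^ 2 - b' ^ 2) :=
      mul_left_cancel₀ hp.ne_zero (by linear_combination -h)
    exact hp.not_isUnit (ham.isUnit_of_dvd' (dvd_mul_right p a') (hm ▸ dvd_mul_right p _))
  · have hapm : IsCoprime a (p * m) := (hp.coprime_iff_not_dvd.mpr hpa).symm.mul_right ham
    have hab2 : IsCoprime a (b ^ 2) := by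
      convert hapm.neg_right.add_mul_left_right a using 1
      linear_combination -h
    exact (IsCoprime.pow_right_iff two_pos).mp hab2

theorem exists_add_sub_of_sq_sub_sq_eq {a b n : ℤ} (ha : 0 < a) (hn : 0 < n)
    (hab : IsCoprime a b) (h : a ^ 2 - b ^ 2 = 4 * n) :
    ∃ u v, 0 < u ∧ 0 < v ∧ IsCoprime u v ∧ u * v = n ∧ a = u + v ∧ b = v - u := by
  have hab2 : Even (a + b) := by
    rcases Int.even_mul.mp (⟨2 * n, by linear_combination h⟩ : Even ((a + b) * (a - b)))
      with hplus | hminus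
    · exact hplus
    · exact (show a - b + 2 * b = a + b by ring) ▸ hminus.add (even_two_mul b)
  obtain ⟨v, hsum⟩ := hab2
  obtain ⟨u, rfl⟩ : ∃ u, a = u + v := ⟨a - v, by ring⟩
  obtain rfl : b = v - u := by linarith
  have huv : u * v = n := mul_left_cancel₀ four_ne_zero (by linear_combination h)
  obtain ⟨hu, hv⟩ | ⟨hu, hv⟩ := pos_and_pos_or_neg_and_neg_of_mul_pos (huv ▸ hn)
  · obtain ⟨α, β, hαβ⟩ := hab
    exact ⟨u, v, hu, hv, ⟨α - β, α + β, by linear_combination hαβ⟩, huv, rfl, rfl⟩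
  · linarith

theorem quartic_ne_sq_of_odd {x y z : ℤ} (hy : Odd y) :
    x ^ 4 + 4 * x ^ 2 * y ^ 2 - 19 * y ^ 4 ≠ z ^ 2 := by
  obtain ⟨k, rfl⟩ := hy
  intro h
  have key : ∀ x k z : ZMod 16,
      x ^ 4 + 4 * x ^ 2 * (2 * k + 1) ^ 2 - 19 * (2 * k + 1) ^ 4 ≠ z ^ 2 := by decide
  have h16 := congrArg (Int.cast : ℤ → ZMod 16) h
  push_cast at h16
  exact key _ _ _ h16

theorem sq_ne_of_odd_of_even {x s t m : ℤ} (hs : Odd s) (ht : Even t) :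
    x ^ 2 ≠ 23 * s ^ 2 + t ^ 2 - 8 * m ^ 2 := by
  obtain ⟨k, rfl⟩ := hs
  obtain ⟨l, rfl⟩ := even_iff_two_dvd.mp ht
  intro h
  have key : ∀ x k l m : ZMod 8,
      x ^ 2 ≠ 23 * (2 * k + 1) ^ 2 + (2 * l) ^ 2 - 8 * m ^ 2 := by decide
  have h8 := congrArg (Int.cast : ℤ → ZMod 8) h
  push_cast at h8
  exact key _ _ _ _ h8

theorem isogenous_quartic_ne_sq_of_odd {w E F : ℤ} (hE : Odd E) (hF : Odd F) :
    w ^ 2 ≠ E ^ 4 - 8 * E ^ 2 * F ^ 2 + 92 * F ^ 4 := by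
  obtain ⟨k, rfl⟩ := hE
  obtain ⟨l, rfl⟩ := hF
  intro h
  have key : ∀ w k l : ZMod 8, w ^ 2 ≠
      (2 * k + 1) ^ 4 - 8 * (2 * k + 1) ^ 2 * (2 * l + 1) ^ 2 + 92 * (2 * l + 1) ^ 4 := by decide
  have h8 := congrArg (Int.cast : ℤ → ZMod 8) h
  push_cast at h8
  exact key _ _ _ h8

theorem sq_sub_four_mul_sq_ne {E F s t : ℤ} (hE : Odd E) (hF : Even F) :
    E ^ 2 - 4 * F ^ 2 ≠ 19 * t ^ 4 - s ^ 4 := by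
  obtain ⟨k, rfl⟩ := hE
  obtain ⟨l, rfl⟩ := even_iff_two_dvd.mp hF
  intro h
  have key : ∀ k l s t : ZMod 8, (2 * k + 1) ^ 2 - 4 * (2 * l) ^ 2 ≠ 19 * t ^ 4 - s ^ 4 := by
    decide
  have h8 := congrArg (Int.cast : ℤ → ZMod 8) h
  push_cast at h8
  exact key _ _ _ _ h8

structure IsQuarticSolution (x y z : ℤ) : Prop where
  x_pos : 0 < x
  y_pos : 0 < y
  z_pos : 0 < z
  eq : x ^ 4 + 4 * x ^ 2 * y ^ 2 - 19 * y ^ 4 = z ^ 2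

structure IsIsogenousSolution (E F w : ℤ) : Prop where
  E_pos : 0 < E
  F_pos : 0 < F
  w_pos : 0 < w
  eq : w ^ 2 = E ^ 4 - 8 * E ^ 2 * F ^ 2 + 92 * F ^ 4

theorem IsQuarticSolution.exists_isCoprime {x y z : ℤ} (h : IsQuarticSolution x y z) :
    ∃ x' y' z', IsQuarticSolution x' y' z' ∧ IsCoprime x' y' ∧ y' ≤ y := by
  obtain ⟨g, x', y', hg, hcop, rfl, rfl⟩ :=
    Int.exists_gcd_one' (Int.gcd_pos_of_ne_zero_left y h.x_pos.ne')
  have hg : (0 : ℤ) < g := by exact_mod_cast hg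
  obtain ⟨z', rfl⟩ : (g : ℤ) ^ 2 ∣ z := by
    rw [← Int.pow_dvd_pow_iff two_ne_zero, ← h.eq]
    exact ⟨x' ^ 4 + 4 * x' ^ 2 * y' ^ 2 - 19 * y' ^ 4, by ring⟩
  have hy' : 0 < y' := pos_of_mul_pos_left h.y_pos hg.le
  refine ⟨x', y', z', ⟨pos_of_mul_pos_left h.x_pos hg.le, hy',
    pos_of_mul_pos_right h.z_pos (by positivity), ?_⟩, Int.isCoprime_iff_gcd_eq_one.mpr hcop,
    le_mul_of_one_le_right hy'.le (by omega)⟩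
  exact mul_left_cancel₀ (pow_ne_zero 4 hg.ne') (by linear_combination h.eq)

theorem exists_isogenous_of_sq_eq {x s t y₀ : ℤ} (hs : 0 < s) (ht : 0 < t) (hy₀ : 0 ≤ y₀)
    (hst : IsCoprime s t) (hmul : s * t = 2 * y₀ ^ 2)
    (h : x ^ 2 = 23 * s ^ 2 + t ^ 2 - 8 * y₀ ^ 2) :
    ∃ E F, 0 < E ∧ 0 < F ∧ F ≤ y₀ ∧ Odd E ∧ IsCoprime E F ∧
      x ^ 2 = E ^ 4 - 8 * E ^ 2 * F ^ 2 + 92 * F ^ 4 := by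
  have hs_even : Even s := by
    by_contra hs_odd
    rw [Int.not_even_iff_odd] at hs_odd
    have ht_even : Even t := (Int.even_mul.mp ⟨y₀ ^ 2, by rw [hmul]; ring⟩).resolve_left
      (Int.not_even_iff_odd.mpr hs_odd)
    exact sq_ne_of_odd_of_even hs_odd ht_even h
  obtain ⟨s₁, rfl⟩ := even_iff_two_dvd.mp hs_even
  have ht_odd : Odd t := Int.isCoprime_two_left.mp hst.of_mul_left_left
  obtain ⟨F, E, hF, hE, hFE, rfl, rfl, rfl⟩ :=
    exists_pow_eq_of_mul_eq_pow two_ne_zero (by omega) ht hy₀ hst.of_mul_left_right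
      (mul_left_cancel₀ two_ne_zero (by linear_combination hmul))
  exact ⟨E, F, hE, hF, le_mul_of_one_le_right hF.le hE, (Int.odd_pow' two_ne_zero).mp ht_odd,
    hFE.symm, by linear_combination h⟩

theorem IsQuarticSolution.exists_isogenous {x y z : ℤ} (h : IsQuarticSolution x y z)
    (hxy : IsCoprime x y) (hy : Even y) :
    ∃ E F w, IsIsogenousSolution E F w ∧ Odd E ∧ IsCoprime E F ∧ F < y := by
  obtain ⟨y₀, rfl⟩ := even_iff_two_dvd.mp hy
  have hy₀ : 0 < y₀ := by have := h.y_pos; omega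
  have hay : IsCoprime (x ^ 2 + 2 * (2 * y₀) ^ 2) (2 * y₀) := by
    rw [show x ^ 2 + 2 * (2 * y₀) ^ 2 = x ^ 2 + 2 * (2 * y₀) * (2 * y₀) by ring]
    exact (hxy.pow_left (m := 2)).add_mul_right_left (2 * (2 * y₀))
  have haz : IsCoprime (x ^ 2 + 2 * (2 * y₀) ^ 2) z :=
    isCoprime_of_sq_sub_sq_eq_prime_mul (by norm_num : Prime (23 : ℤ)) (hay.pow_right (n := 4))
      (by rw [← h.eq]; ring)
  obtain ⟨u, v, hu, hv, huv, hmul, hau, -⟩ := exists_add_sub_of_sq_sub_sq_eq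
    (n := 23 * (2 * y₀ ^ 2) ^ 2) (by positivity) (by positivity) haz (by rw [← h.eq]; ring)
  obtain ⟨s, t, hs, ht, hst, hst_mul, hsum⟩ : ∃ s t, 0 < s ∧ 0 < t ∧ IsCoprime s t ∧
      s * t = 2 * y₀ ^ 2 ∧ u + v = 23 * s ^ 2 + t ^ 2 := by
    obtain ⟨s, t, hs, ht, hst, hst_mul, ⟨rfl, rfl⟩ | ⟨rfl, rfl⟩⟩ :=
      exists_pow_eq_of_mul_eq_prime_mul_pow (by norm_num) two_ne_zero hu hv (by positivity)
        huv hmul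
    · exact ⟨s, t, hs, ht, hst, hst_mul, by ring⟩
    · exact ⟨t, s, ht, hs, hst.symm, (mul_comm t s).trans hst_mul, by ring⟩
  obtain ⟨E, F, hE, hF, hFy, hE_odd, hEF, hx⟩ :=
    exists_isogenous_of_sq_eq (x := x) hs ht hy₀.le hst hst_mul
      (by linear_combination hau + hsum)
  exact ⟨E, F, x, ⟨hE, hF, h.x_pos, hx⟩, hE_odd, hEF, by omega⟩

theorem IsIsogenousSolution.exists_quartic {E F w : ℤ} (h : IsIsogenousSolution E F w)
    (hE : Odd E) (hEF : IsCoprime E F) : ∃ x y z, IsQuarticSolution x y z ∧ y ≤ F := by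
  have hF : Even F := by
    by_contra hF
    exact isogenous_quartic_ne_sq_of_odd hE (Int.not_even_iff_odd.mp hF) h.eq
  have hc : Odd (E ^ 2 - 4 * F ^ 2) := hE.pow.sub_even ⟨2 * F ^ 2, by ring⟩
  have hcF : IsCoprime (E ^ 2 - 4 * F ^ 2) F := by
    rw [show E ^ 2 - 4 * F ^ 2 = E ^ 2 + F * (-4 * F) by ring]
    exact (hEF.pow_left (m := 2)).add_mul_left_left (-4 * F)
  have hcw : IsCoprime (E ^ 2 - 4 * F ^ 2) w :=
    isCoprime_of_sq_sub_sq_eq_prime_mul (m := -(2 ^ 2 * F ^ 4)) (by norm_num : Prime (19 : ℤ))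
      ((Int.isCoprime_two_right.mpr hc).pow_right.mul_right hcF.pow_right).neg_right
      (by rw [h.eq]; ring)
  obtain ⟨u, v, hu, hv, huv, hmul, -, hcv⟩ := exists_add_sub_of_sq_sub_sq_eq (n := 19 * F ^ 4)
    h.w_pos (by have := h.F_pos; positivity) hcw.symm (by rw [h.eq]; ring)
  obtain ⟨s, t, hs, ht, -, rfl, hsplit⟩ := exists_pow_eq_of_mul_eq_prime_mul_pow
    (by norm_num) four_ne_zero hu hv h.F_pos.le huv hmul
  rcases hsplit with ⟨rfl, rfl⟩ | ⟨rfl, rfl⟩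
  · exact ⟨t, s, E, ⟨ht, hs, h.E_pos, by linear_combination -hcv⟩,
      le_mul_of_one_le_right hs.le ht⟩
  · exact absurd hcv (sq_sub_four_mul_sq_ne hE hF)

theorem not_isQuarticSolution {x y z : ℤ} : ¬ IsQuarticSolution x y z := by
  intro h
  obtain ⟨x', y', z', h', hxy', hy'⟩ := h.exists_isCoprime
  rcases Int.even_or_odd y' with hy'_even | hy'_odd
  · obtain ⟨E, F, w, hiso, hE, hEF, hF⟩ := h'.exists_isogenous hxy' hy'_even
    obtain ⟨X, Y, Z, hsol, hY⟩ := hiso.exists_quartic hE hEF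
    have hY_pos := hsol.y_pos
    exact not_isQuarticSolution hsol
  · exact quartic_ne_sq_of_odd hy'_odd h'.eq
termination_by y.toNat
decreasing_by omega

theorem stmt8 :
    ¬ ∃ x y z : ℤ, 0 < x ∧ 0 < y ∧ 0 < z ∧
      x ^ 4 + 4 * x ^ 2 * y ^ 2 - 19 * y ^ 4 = z ^ 2 := by
  rintro ⟨x, y, z, hx, hy, hz, h⟩
  exact not_isQuarticSolution ⟨hx, hy, hz, h⟩
end
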